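/- Assume the sharp quantitative isoperimetric inequality λ(E) ≤ C_F(N)√δ(E) holds for all sets of finite perimeter in ℝ^N. Then for every N ≥ 2 and every D > 0 there exists a constant C(N,D) (one may take C(N,D) = 2^N C_F(N) C₃^N 3^{N(N−1)/2} D^N for a dimensional constant C₃) such that every set E ⊆ ℝ^N of finite perimeter with 0 < |E| < ∞ and essential diameter at most D|E|^{1/N} satisfies λ₀(E) ≤ C(N,D)√δ(E). -/

import Mathlib

open MeasureTheory Metric Set ENNReal

noncomputable section

abbrev En (N : ℕ) := EuclideanSpace ℝ (Fin N)

/-- The volume of the unit ball in `ℝ^N`. -/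
def omegaB (N : ℕ) : ℝ := (volume (Metric.ball (0 : En N) 1)).toReal

/-- The divergence of a vector field on `ℝ^N`. -/
def divg {N : ℕ} (φ : En N → En N) (x : En N) : ℝ :=
  ∑ i, fderiv ℝ φ x (EuclideanSpace.single i (1 : ℝ)) i

/-- The set of candidate values in the sup defining the distributional perimeter of `E`. -/
def perSet {N : ℕ} (E : Set (En N)) : Set ℝ :=
  {p | ∃ φ : En N → En N, ContDiff ℝ 1 φ ∧ HasCompactSupport φ ∧
    (∀ x, ‖φ x‖ ≤ 1) ∧ p = ∫ x in E, divg φ x}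

/-- The distributional (De Giorgi) perimeter of `E`. -/
def perimeter {N : ℕ} (E : Set (En N)) : ℝ := sSup (perSet E)

/-- `E` has finite perimeter. -/
def HasFinitePerimeter {N : ℕ} (E : Set (En N)) : Prop := BddAbove (perSet E)

/-- The essential diameter of `E`. -/
def essDiam {N : ℕ} (E : Set (En N)) : ℝ≥0∞ :=
  sInf {d : ℝ≥0∞ |
    (volume.prod volume) {p : En N × En N | p.1 ∈ E ∧ p.2 ∈ E ∧ d < edist p.1 p.2} = 0}

/-- The barycenter of `E`. -/
def bary {N : ℕ} (E : Set (En N)) : En N := ((volume E).toReal)⁻¹ • ∫ x in E, x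

/-- The radius of the ball having the same volume as `E`. -/
def ballRad {N : ℕ} (E : Set (En N)) : ℝ := ((volume E).toReal / omegaB N) ^ (1 / (N : ℝ))

/-- The barycentric asymmetry `λ₀(E)`. -/
def lam0 {N : ℕ} (E : Set (En N)) : ℝ :=
  (volume (symmDiff E (Metric.ball (bary E) (ballRad E)))).toReal / (volume E).toReal

/-- The Fraenkel asymmetry `λ(E)`. -/
def fraenkel {N : ℕ} (E : Set (En N)) : ℝ :=
  ⨅ y : En N, (volume (symmDiff E (Metric.ball y (ballRad E)))).toReal / (volume E).toReal

/-- The isoperimetric deficit `δ(E)`. -/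
def deficit {N : ℕ} (E : Set (En N)) : ℝ :=
  (perimeter E - perimeter (Metric.ball (0 : En N) (ballRad E))) /
    perimeter (Metric.ball (0 : En N) (ballRad E))

/-- Measure-theoretic connectedness. -/
def MConnected {N : ℕ} (E : Set (En N)) : Prop :=
  ∀ F : Set (En N), MeasurableSet F → F ⊆ E → 0 < volume F → volume F < volume E →
    perimeter E < perimeter F + perimeter (E \ F)

/-!
Let `d` bound the essential diameter of `E`, `r` be the radius with `|B_r| = |E|`,
`B_y = B(y, r)` and `t = |bar(E) - y|`. Since `∫_{B_y} (x - y) = 0`, one has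
`|E| (bar(E) - y) = ∫_{E \ B_y} (x - y) - ∫_{B_y \ E} (x - y)`; if `E` meets `B_y` in positive
measure, `E` lies a.e. within `d + r` of `y`, so `t ≤ (d + r) |E Δ B_y| / |E|`. Two balls of
radius `r` at distance `t` differ in measure by at most `2 N t (r + t)^(N-1) ω_N`, and `r ≤ d`,
so `λ₀(E) ≤ (1 + 4 N 5^(N-1)) (ω_N d^N / |E|) |E Δ B_y| / |E|` for every `y`. Taking the
infimum over `y` bounds `λ₀(E)` by a multiple of `λ(E)`, and for `d = D |E|^(1/N)` the factor
is `(1 + 4 N 5^(N-1)) ω_N D^N`.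
-/

open scoped symmDiff

variable {N : ℕ}

section Balls

lemma omegaB_pos : 0 < omegaB N :=
  ENNReal.toReal_pos (measure_ball_pos volume 0 one_pos).ne' measure_ball_lt_top.ne

lemma measureReal_ball (hN : N ≠ 0) (c : En N) {r : ℝ} (hr : 0 ≤ r) :
    volume.real (ball c r) = r ^ N * omegaB N := by
  have : NeZero N := ⟨hN⟩
  rw [measureReal_def, Measure.addHaar_ball volume c hr, finrank_euclideanSpace_fin,
    ENNReal.toReal_mul, ENNReal.toReal_ofReal (by positivity), omegaB]

lemma measureReal_closedBall (c : En N) {r : ℝ} (hr : 0 ≤ r) :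
    volume.real (closedBall c r) = r ^ N * omegaB N := by
  rw [measureReal_def, Measure.addHaar_closedBall volume c hr, finrank_euclideanSpace_fin,
    ENNReal.toReal_mul, ENNReal.toReal_ofReal (by positivity), omegaB]

lemma ballRad_nonneg (E : Set (En N)) : 0 ≤ ballRad E := by
  unfold ballRad; exact Real.rpow_nonneg (div_nonneg ENNReal.toReal_nonneg omegaB_pos.le) _

lemma ballRad_pow_mul_omegaB (hN : N ≠ 0) (E : Set (En N)) :
    ballRad E ^ N * omegaB N = volume.real E := by
  rw [ballRad, one_div,
    Real.rpow_inv_natCast_pow (div_nonneg ENNReal.toReal_nonneg omegaB_pos.le) hN,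
    div_mul_cancel₀ _ omegaB_pos.ne', measureReal_def]

lemma measureReal_ball_ballRad (hN : N ≠ 0) (E : Set (En N)) (y : En N) :
    volume.real (ball y (ballRad E)) = volume.real E := by
  rw [measureReal_ball hN y (ballRad_nonneg E), ballRad_pow_mul_omegaB hN]

lemma measureReal_ball_sdiff_ball_le (hN : N ≠ 0) (y c : En N) {r : ℝ} (hr : 0 ≤ r) :
    volume.real (ball y r \ ball c r) ≤ N * dist y c * (r + dist y c) ^ (N - 1) * omegaB N := by
  set t := dist y c
  have ht : 0 ≤ t := dist_nonneg
  have hsub : ball y r \ ball c r ⊆ ball c (r + t) \ ball c r :=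
    sdiff_subset_sdiff_left (ball_subset_ball' le_rfl)
  have hpow : (r + t) ^ N - r ^ N ≤ N * t * (r + t) ^ (N - 1) := by
    have := abs_pow_sub_pow_le (r + t) r N
    rwa [abs_of_nonneg (by linarith [pow_le_pow_left₀ hr (le_add_of_nonneg_right ht) N]),
      add_sub_cancel_left, abs_of_nonneg ht, abs_of_nonneg (by linarith), abs_of_nonneg hr,
      max_eq_left (by linarith), mul_comm t] at this
  calc volume.real (ball y r \ ball c r) ≤ volume.real (ball c (r + t) \ ball c r) :=
        measureReal_mono hsub (measure_ne_top_of_subset sdiff_subset measure_ball_lt_top.ne)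
    _ = ((r + t) ^ N - r ^ N) * omegaB N := by
        rw [measureReal_sdiff (ball_subset_ball (by linarith)) measurableSet_ball,
          measureReal_ball hN c (by linarith), measureReal_ball hN c hr, sub_mul]
    _ ≤ N * t * (r + t) ^ (N - 1) * omegaB N := by gcongr; exact omegaB_pos.le

lemma measureReal_ball_symmDiff_ball_le (hN : N ≠ 0) (y c : En N) {r : ℝ} (hr : 0 ≤ r) :
    volume.real (ball y r ∆ ball c r) ≤
      2 * N * dist y c * (r + dist y c) ^ (N - 1) * omegaB N := by
  have h₁ := measureReal_ball_sdiff_ball_le hN y c hr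
  have h₂ := measureReal_ball_sdiff_ball_le hN c y hr
  rw [dist_comm c y] at h₂
  calc volume.real (ball y r ∆ ball c r)
      ≤ volume.real (ball y r \ ball c r) + volume.real (ball c r \ ball y r) :=
        measureReal_union_le _ _
    _ ≤ _ := by linarith

end Balls

section EssentialDiameter

lemma prod_setOf_essDiam_lt_edist_eq_zero (E : Set (En N)) :
    (volume.prod volume) {p : En N × En N | p.1 ∈ E ∧ p.2 ∈ E ∧ essDiam E < edist p.1 p.2} = 0 := by
  set S := {d : ℝ≥0∞ |
    (volume.prod volume) {p : En N × En N | p.1 ∈ E ∧ p.2 ∈ E ∧ d < edist p.1 p.2} = 0}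
  have hS : S.Nonempty := ⟨⊤, by simp [S]⟩
  obtain ⟨u, -, hu, huS⟩ := exists_seq_tendsto_sInf hS (OrderBot.bddBelow S)
  refine measure_mono_null (fun p hp => ?_) (measure_iUnion_null huS)
  obtain ⟨n, hn⟩ := (hu.eventually (gt_mem_nhds hp.2.2)).exists
  exact mem_iUnion.2 ⟨n, hp.1, hp.2.1, hn⟩

lemma exists_mem_ae_edist_le_essDiam {E S : Set (En N)} (hSE : S ⊆ E) (hS : volume S ≠ 0) :
    ∃ x ∈ S, ∀ᵐ y, y ∈ E → edist x y ≤ essDiam E := by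
  set T := {x | volume {y | x ∈ E ∧ y ∈ E ∧ essDiam E < edist x y} ≠ 0}
  have hT : volume T = 0 :=
    ae_iff.1 (Measure.measure_ae_null_of_prod_null (prod_setOf_essDiam_lt_edist_eq_zero E))
  obtain ⟨x, hxS, hxT⟩ :=
    nonempty_of_measure_ne_zero (by rwa [measure_sdiff_null hT] : volume (S \ T) ≠ 0)
  refine ⟨x, hxS, ?_⟩
  filter_upwards [measure_eq_zero_iff_ae_notMem.1 (not_not.1 hxT)] with y hy hyE
  exact not_lt.1 fun h => hy ⟨hSE hxS, hyE, h⟩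

variable {E : Set (En N)} {d : ℝ}

lemma exists_ae_subset_closedBall_of_essDiam_le (hE : volume E ≠ 0) (hd : 0 ≤ d)
    (hdiam : essDiam E ≤ ENNReal.ofReal d) : ∃ x, E ≤ᵐ[volume] closedBall x d := by
  obtain ⟨x, -, hx⟩ := exists_mem_ae_edist_le_essDiam subset_rfl hE
  refine ⟨x, hx.mono fun y hy (hyE : y ∈ E) => ?_⟩
  change y ∈ closedBall x d
  rw [mem_closedBall, dist_comm, ← edist_le_ofReal hd]
  exact (hy hyE).trans hdiam

lemma measureReal_le_of_essDiam_le (hd : 0 ≤ d) (hdiam : essDiam E ≤ ENNReal.ofReal d) :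
    volume.real E ≤ d ^ N * omegaB N := by
  rcases eq_or_ne (volume E) 0 with hE | hE
  · rw [measureReal_def, hE, ENNReal.toReal_zero]; exact mul_nonneg (by positivity) omegaB_pos.le
  obtain ⟨x, hx⟩ := exists_ae_subset_closedBall_of_essDiam_le hE hd hdiam
  rw [← measureReal_closedBall x hd]
  exact ENNReal.toReal_mono measure_closedBall_lt_top.ne (measure_mono_ae hx)

lemma ballRad_le_of_essDiam_le (hN : N ≠ 0) (hd : 0 ≤ d) (hdiam : essDiam E ≤ ENNReal.ofReal d) :
    ballRad E ≤ d := by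
  have h := measureReal_le_of_essDiam_le hd hdiam
  rw [← ballRad_pow_mul_omegaB hN, mul_le_mul_iff_left₀ omegaB_pos] at h
  exact (pow_le_pow_iff_left₀ (ballRad_nonneg E) hd hN).1 h

end EssentialDiameter

section Barycenter

lemma setIntegral_ball_sub_center {F : Type*} [NormedAddCommGroup F] [NormedSpace ℝ F]
    [MeasurableSpace F] [BorelSpace F] (μ : Measure F) [μ.IsAddLeftInvariant] [μ.IsNegInvariant]
    (c : F) (r : ℝ) : ∫ x in ball c r, (x - c) ∂μ = 0 := by
  -- the reflection `x ↦ 2c - x` preserves `μ` and `ball c r` and negates `x - c`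
  have hneg (x : F) : c + c - x - c = -(x - c) := by abel
  have hpre : (fun x => (c + c) - x) ⁻¹' ball c r = ball c r := by
    ext x
    simp only [mem_preimage, mem_ball, dist_eq_norm, hneg, norm_neg]
  have h := (Measure.measurePreserving_sub_left μ (c + c)).setIntegral_preimage_emb
    (Homeomorph.subLeft (c + c)).measurableEmbedding (fun x => x - c) (ball c r)
  simp_rw [hpre, hneg, integral_neg] at h
  have h2 : (2 : ℝ) • ∫ x in ball c r, (x - c) ∂μ = 0 := by
    rw [two_smul]; nth_rewrite 1 [← h]; exact neg_add_cancel _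
  exact (smul_eq_zero.1 h2).resolve_left two_ne_zero

lemma setIntegral_sub_setIntegral {X F : Type*} [MeasurableSpace X] [NormedAddCommGroup F]
    [NormedSpace ℝ F] {μ : Measure X} {f : X → F} {s t : Set X} (hs : MeasurableSet s)
    (ht : MeasurableSet t) (hfs : IntegrableOn f s μ) (hft : IntegrableOn f t μ) :
    ∫ x in s, f x ∂μ - ∫ x in t, f x ∂μ = ∫ x in s \ t, f x ∂μ - ∫ x in t \ s, f x ∂μ := by
  rw [← integral_inter_add_sdiff ht hfs, ← integral_inter_add_sdiff hs hft, inter_comm]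
  abel

lemma measureReal_smul_bary {E : Set (En N)} (hfin : volume E ≠ ⊤) :
    volume.real E • bary E = ∫ x in E, x := by
  rcases eq_or_ne (volume E) 0 with hE | hE
  · rw [Measure.restrict_eq_zero.2 hE, integral_zero_measure, measureReal_def, hE,
      ENNReal.toReal_zero, zero_smul]
  · have hm : volume.real E ≠ 0 := ENNReal.toReal_ne_zero.2 ⟨hE, hfin⟩
    rw [bary, smul_smul, ← measureReal_def, mul_inv_cancel₀ hm, one_smul]

lemma measureReal_mul_dist_bary_le {E : Set (En N)} (hE : MeasurableSet E) (hfin : volume E ≠ ⊤)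
    {y : En N} {r R : ℝ} (hrR : r ≤ R) (hR : ∀ᵐ x, x ∈ E → dist x y ≤ R) :
    volume.real E * dist (bary E) y ≤ R * volume.real (E ∆ ball y r) := by
  have hRE : ∀ᵐ x, x ∈ E → ‖x - y‖ ≤ R := by simpa only [dist_eq_norm] using hR
  have hRB : ∀ᵐ x, x ∈ ball y r → ‖x - y‖ ≤ R :=
    ae_of_all _ fun x hx => (mem_ball_iff_norm.1 hx).le.trans hrR
  have hintE : IntegrableOn (fun x : En N => x - y) E :=
    Measure.integrableOn_of_bounded hfin (by fun_prop) ((ae_restrict_iff' hE).2 hRE)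
  have hintB : IntegrableOn (fun x : En N => x - y) (ball y r) :=
    Measure.integrableOn_of_bounded measure_ball_lt_top.ne (by fun_prop)
      ((ae_restrict_iff' measurableSet_ball).2 hRB)
  have hid : IntegrableOn (fun x : En N => x) E :=
    (hintE.add (integrableOn_const hfin (C := y))).congr_fun (fun x _ => sub_add_cancel x y) hE
  have hkey : volume.real E • (bary E - y) =
      (∫ x in E \ ball y r, (x - y)) - ∫ x in ball y r \ E, (x - y) :=
    calc volume.real E • (bary E - y) = (∫ x in E, (x - y)) - ∫ x in ball y r, (x - y) := by
          rw [setIntegral_ball_sub_center, sub_zero, integral_sub hid (integrableOn_const hfin),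
            setIntegral_const, smul_sub, measureReal_smul_bary hfin]
      _ = _ := setIntegral_sub_setIntegral hE measurableSet_ball hintE hintB
  have hEB : ‖∫ x in E \ ball y r, (x - y)‖ ≤ R * volume.real (E \ ball y r) :=
    norm_setIntegral_le_of_norm_le_const_ae' (measure_ne_top_of_subset sdiff_subset hfin).lt_top
      (hRE.mono fun x hx hxE => hx hxE.1)
  have hBE : ‖∫ x in ball y r \ E, (x - y)‖ ≤ R * volume.real (ball y r \ E) :=
    norm_setIntegral_le_of_norm_le_const_ae' (measure_ne_top_of_subset sdiff_subset
      measure_ball_lt_top.ne).lt_top (hRB.mono fun x hx hxB => hx hxB.1)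
  calc volume.real E * dist (bary E) y = ‖volume.real E • (bary E - y)‖ := by
        rw [norm_smul, Real.norm_of_nonneg measureReal_nonneg, dist_eq_norm]
    _ ≤ R * volume.real (E \ ball y r) + R * volume.real (ball y r \ E) := by
        rw [hkey]; exact (norm_sub_le _ _).trans (add_le_add hEB hBE)
    _ = R * volume.real (E ∆ ball y r) := by
        rw [measureReal_symmDiff_eq hE measurableSet_ball hfin measure_ball_lt_top.ne, mul_add]

end Barycenter

section Asymmetry

/-- `λ₀(E) = asymmAt E (bary E)` and `λ(E) = ⨅ y, asymmAt E y`. -/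
def asymmAt (E : Set (En N)) (y : En N) : ℝ :=
  volume.real (E ∆ ball y (ballRad E)) / volume.real E

variable {E : Set (En N)}

lemma asymmAt_nonneg (E : Set (En N)) (y : En N) : 0 ≤ asymmAt E y :=
  div_nonneg measureReal_nonneg measureReal_nonneg

lemma asymmAt_le_two (hN : N ≠ 0) (hfin : volume E ≠ ⊤) (y : En N) : asymmAt E y ≤ 2 := by
  refine div_le_of_le_mul₀ measureReal_nonneg zero_le_two ?_
  calc volume.real (E ∆ ball y (ballRad E)) ≤ volume.real (E ∪ ball y (ballRad E)) :=
        measureReal_mono symmDiff_subset_union (measure_union_ne_top hfin measure_ball_lt_top.ne)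
    _ ≤ volume.real E + volume.real (ball y (ballRad E)) := measureReal_union_le _ _
    _ = 2 * volume.real E := by rw [measureReal_ball_ballRad hN]; ring

lemma asymmAt_eq_two_of_inter_null (hN : N ≠ 0) (hE : MeasurableSet E) (hE0 : volume E ≠ 0)
    (hfin : volume E ≠ ⊤) {y : En N} (hy : volume (E ∩ ball y (ballRad E)) = 0) :
    asymmAt E y = 2 := by
  have hm : volume.real E ≠ 0 := ENNReal.toReal_ne_zero.2 ⟨hE0, hfin⟩
  have hEB : volume.real (E ∩ ball y (ballRad E)) = 0 := by
    rw [measureReal_def, hy, ENNReal.toReal_zero]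
  rw [asymmAt, measureReal_symmDiff_eq hE measurableSet_ball hfin measure_ball_lt_top.ne,
    measureReal_sdiff_null' hEB hfin,
    measureReal_sdiff_null' (by rwa [inter_comm]) measure_ball_lt_top.ne,
    measureReal_ball_ballRad hN]
  field_simp
  ring

lemma lam0_le_asymmAt_add (hN : N ≠ 0) (hfin : volume E ≠ ⊤) (y : En N) :
    lam0 E ≤ asymmAt E y + 2 * N * dist (bary E) y * (ballRad E + dist (bary E) y) ^ (N - 1)
      * omegaB N / volume.real E := by
  change volume.real (E ∆ ball (bary E) (ballRad E)) / volume.real E ≤ _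
  rw [asymmAt, ← add_div]
  gcongr
  calc volume.real (E ∆ ball (bary E) (ballRad E))
      ≤ volume.real (E ∆ ball y (ballRad E))
          + volume.real (ball y (ballRad E) ∆ ball (bary E) (ballRad E)) :=
        measureReal_symmDiff_le _ hfin measure_ball_lt_top.ne
    _ ≤ _ := by
        gcongr
        rw [dist_comm]
        exact measureReal_ball_symmDiff_ball_le hN _ _ (ballRad_nonneg E)

variable {d : ℝ}

lemma measureReal_mul_dist_bary_le_of_essDiam_le (hE : MeasurableSet E) (hfin : volume E ≠ ⊤)
    (hd : 0 ≤ d) (hdiam : essDiam E ≤ ENNReal.ofReal d) {y : En N} {r : ℝ}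
    (hy : volume (E ∩ ball y r) ≠ 0) :
    volume.real E * dist (bary E) y ≤ (d + r) * volume.real (E ∆ ball y r) := by
  obtain ⟨x, hx, hxE⟩ := exists_mem_ae_edist_le_essDiam inter_subset_left hy
  refine measureReal_mul_dist_bary_le hE hfin (le_add_of_nonneg_left hd)
    (hxE.mono fun z hz hzE => ?_)
  have hxz : dist x z ≤ d := (edist_le_ofReal hd).1 ((hz hzE).trans hdiam)
  calc dist z y ≤ dist z x + dist x y := dist_triangle _ _ _
    _ ≤ d + r := add_le_add (by rwa [dist_comm]) (mem_ball.1 hx.2).le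

lemma lam0_le_mul_asymmAt (hN : N ≠ 0) (hE : MeasurableSet E) (hE0 : volume E ≠ 0)
    (hfin : volume E ≠ ⊤) (hd : 0 ≤ d) (hdiam : essDiam E ≤ ENNReal.ofReal d) (y : En N) :
    lam0 E ≤ (1 + 4 * N * 5 ^ (N - 1)) * (d ^ N * omegaB N / volume.real E) * asymmAt E y := by
  set m := volume.real E
  set r := ballRad E
  set L := asymmAt E y
  set κ := d ^ N * omegaB N / m
  have hm : 0 < m := ENNReal.toReal_pos hE0 hfin
  have hκ : 1 ≤ κ := (one_le_div hm).2 (measureReal_le_of_essDiam_le hd hdiam)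
  have hL : 0 ≤ L := asymmAt_nonneg E y
  have hc : (1 : ℝ) ≤ 1 + 4 * N * 5 ^ (N - 1) := le_add_of_nonneg_right (by positivity)
  by_cases hy : volume (E ∩ ball y r) = 0
  · calc lam0 E ≤ 2 := asymmAt_le_two hN hfin (bary E)
      _ = 1 * 1 * L := by
          rw [show L = 2 from asymmAt_eq_two_of_inter_null hN hE hE0 hfin hy]; ring
      _ ≤ _ := by gcongr
  set t := dist (bary E) y
  have hrd : r ≤ d := ballRad_le_of_essDiam_le hN hd hdiam
  have ht : t ≤ 2 * d * L := by
    have h := measureReal_mul_dist_bary_le_of_essDiam_le hE hfin hd hdiam hy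
    rw [← div_mul_cancel₀ (volume.real (E ∆ ball y r)) hm.ne', mul_comm m t, ← mul_assoc,
      mul_le_mul_iff_left₀ hm, show volume.real (E ∆ ball y r) / m = L from rfl] at h
    nlinarith [mul_le_mul_of_nonneg_right hrd hL]
  have hrt : r + t ≤ 5 * d := by nlinarith [asymmAt_le_two hN hfin y]
  have hrt0 : 0 ≤ r + t := add_nonneg (ballRad_nonneg E) dist_nonneg
  have hpow : 2 * N * t * (r + t) ^ (N - 1) ≤ 4 * N * 5 ^ (N - 1) * d ^ N * L :=
    calc 2 * N * t * (r + t) ^ (N - 1) ≤ 2 * N * (2 * d * L) * (5 * d) ^ (N - 1) := by gcongr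
      _ = 4 * N * 5 ^ (N - 1) * d ^ N * L := by rw [← mul_pow_sub_one hN d, mul_pow]; ring
  calc lam0 E ≤ L + 2 * N * t * (r + t) ^ (N - 1) * omegaB N / m := lam0_le_asymmAt_add hN hfin y
    _ ≤ L + 4 * N * 5 ^ (N - 1) * d ^ N * L * omegaB N / m := by gcongr; exact omegaB_pos.le
    _ = L + 4 * N * 5 ^ (N - 1) * κ * L := by ring
    _ ≤ (1 + 4 * N * 5 ^ (N - 1)) * κ * L := by nlinarith [mul_nonneg (sub_nonneg.2 hκ) hL]

lemma lam0_le_mul_fraenkel (hN : N ≠ 0) (hE : MeasurableSet E) (hE0 : volume E ≠ 0)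
    (hfin : volume E ≠ ⊤) (hd : 0 ≤ d) (hdiam : essDiam E ≤ ENNReal.ofReal d) :
    lam0 E ≤ (1 + 4 * N * 5 ^ (N - 1)) * (d ^ N * omegaB N / volume.real E) * fraenkel E := by
  have hK : 1 ≤ (1 + 4 * N * 5 ^ (N - 1)) * (d ^ N * omegaB N / volume.real E) :=
    one_le_mul_of_one_le_of_one_le (le_add_of_nonneg_right (by positivity))
      ((one_le_div (ENNReal.toReal_pos hE0 hfin)).2 (measureReal_le_of_essDiam_le hd hdiam))
  rw [← div_le_iff₀' (zero_lt_one.trans_le hK)]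
  exact le_ciInf fun y => (div_le_iff₀' (zero_lt_one.trans_le hK)).2
    (lam0_le_mul_asymmAt hN hE hE0 hfin hd hdiam y)

end Asymmetry

/-- Main theorem. Assuming the sharp quantitative isoperimetric inequality,
for every `N ≥ 2` and `D > 0` there is a constant `C(N,D) = 2^N C_F(N) C₃^N 3^{N(N-1)/2} D^N`
such that every finite-perimeter set with essential diameter at most `D|E|^{1/N}` satisfies
`λ₀(E) ≤ C(N,D) √δ(E)`. -/
theorem main_barycentric_quantitative {N : ℕ} (hN : 2 ≤ N) (CF : ℝ)
    (hQ : ∀ F : Set (En N), MeasurableSet F → HasFinitePerimeter F →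
      0 < volume F → volume F ≠ ⊤ → fraenkel F ≤ CF * Real.sqrt (deficit F)) :
    ∃ C₃ : ℝ, 0 < C₃ ∧ ∀ D : ℝ, 0 < D → ∀ E : Set (En N), MeasurableSet E →
      HasFinitePerimeter E → 0 < volume E → volume E ≠ ⊤ →
      essDiam E ≤ ENNReal.ofReal (D * (volume E).toReal ^ (1 / (N : ℝ))) →
      lam0 E ≤ 2 ^ N * CF * C₃ ^ N * 3 ^ (N * (N - 1) / 2) * D ^ N
        * Real.sqrt (deficit E) := by
  have hN0 : N ≠ 0 := by omega
  set c : ℝ := (1 + 4 * N * 5 ^ (N - 1)) * omegaB N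
  have hc0 : 0 ≤ c := mul_nonneg (by positivity) omegaB_pos.le
  refine ⟨max 1 c, by positivity, fun D hD E hE hPer hpos hfin hdiam => ?_⟩
  rw [← measureReal_def] at hdiam
  have hm : 0 < volume.real E := ENNReal.toReal_pos hpos.ne' hfin
  have hdN : (D * volume.real E ^ (1 / (N : ℝ))) ^ N = D ^ N * volume.real E := by
    rw [mul_pow, one_div, Real.rpow_inv_natCast_pow hm.le hN0]
  have hlam : lam0 E ≤ c * D ^ N * fraenkel E := by
    have h := lam0_le_mul_fraenkel hN0 hE hpos.ne' hfin (by positivity) hdiam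
    rw [hdN, mul_right_comm (D ^ N), mul_div_cancel_right₀ _ hm.ne'] at h
    exact h.trans_eq (by ring)
  have hfr := hQ E hE hPer hpos hfin
  have hδ : 0 ≤ CF * Real.sqrt (deficit E) :=
    (Real.iInf_nonneg fun y => asymmAt_nonneg E y).trans hfr
  have hC : c * D ^ N ≤ 2 ^ N * max 1 c ^ N * 3 ^ (N * (N - 1) / 2) * D ^ N :=
    calc c * D ^ N ≤ max 1 c ^ N * D ^ N := by
          gcongr; exact (le_max_right 1 c).trans (le_self_pow₀ (le_max_left 1 c) hN0)
      _ ≤ (2 ^ N * 3 ^ (N * (N - 1) / 2)) * (max 1 c ^ N * D ^ N) :=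
          le_mul_of_one_le_left (by positivity) (one_le_mul_of_one_le_of_one_le
            (one_le_pow₀ one_le_two) (one_le_pow₀ (by norm_num)))
      _ = _ := by ring
  calc lam0 E ≤ c * D ^ N * fraenkel E := hlam
    _ ≤ c * D ^ N * (CF * Real.sqrt (deficit E)) := by gcongr
    _ ≤ (2 ^ N * max 1 c ^ N * 3 ^ (N * (N - 1) / 2) * D ^ N) * (CF * Real.sqrt (deficit E)) := by
        gcongr
    _ = _ := by ring
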